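/- Let f : ℝⁿ → ℝ be C² and κ-concave for some κ > 0, with |f(x)| ≤ c₁·exp(c₂|x|²) for some c₁ ≥ 0 and 0 ≤ c₂ < κ/2, and let P(dx) = Z⁻¹e^{f(x)}dx. Then −∞ < sup over product probability measures Q on ℝⁿ of (∫ f dQ − H(Q)) < ∞; any product measure Q* attaining this supremum satisfies f ∈ L¹(Q*); and log ∫_{ℝⁿ} e^{f(x)}dx − sup over product measures Q of (∫ f dQ − H(Q)) = inf over product measures Q of H(Q | P). -/

import Mathlib

/-!
For a probability measure `Q`, integrating `log dQ/dx = log dQ/dP + f - log ∫ exp f` against `Q`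
gives the Gibbs variational identity `∫ f dQ - H(Q) = log ∫ exp f - H(Q | P)` in `EReal`, both
sides being `-∞` together; the supremum over product measures of the left side is therefore
`log ∫ exp f` minus the infimum of `H(Q | P)`. The `κ`-concavity gives a Gaussian upper bound
`f ≤ C - κ|x|²/4`, so `exp f` and `exp (f + |f|/2)` are integrable. By `u v ≤ u log u - u + exp v`
the latter makes `f` integrable under every `Q` with `H(Q | P) < ∞`, in particular at an
optimizer; the uniform measure on the unit cube has a finite objective, so the supremum is finite.
-/

open MeasureTheory Real Filter Topology
open scoped ENNReal NNReal BigOperators Classical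

noncomputable section

/-- The integral `∫ f dQ` of a real function, with values in the extended reals. -/
def intE {α : Type*} [MeasurableSpace α] (f : α → ℝ) (Q : Measure α) : EReal :=
  ((∫⁻ x, ENNReal.ofReal (f x) ∂Q : ℝ≥0∞) : EReal)
    - ((∫⁻ x, ENNReal.ofReal (-f x) ∂Q : ℝ≥0∞) : EReal)

/-- The (negative) differential entropy `H(Q) = ∫ Q(x) log Q(x) dx`, `= ∞` if `Q` is not
absolutely continuous or the negative part of `Q log Q` is not integrable. -/
def Hent {α : Type*} [MeasureSpace α] (Q : Measure α) : EReal :=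
  if Q ≪ (volume : Measure α) ∧
      Integrable (fun x =>
        min ((Q.rnDeriv volume x).toReal * Real.log (Q.rnDeriv volume x).toReal) 0)
        (volume : Measure α) then
    ((∫⁻ x, ENNReal.ofReal
        ((Q.rnDeriv volume x).toReal * Real.log (Q.rnDeriv volume x).toReal)
        ∂(volume : Measure α) : ℝ≥0∞) : EReal)
      + ((∫ x, min ((Q.rnDeriv volume x).toReal * Real.log (Q.rnDeriv volume x).toReal) 0
          ∂(volume : Measure α) : ℝ) : EReal)
  else ⊤

/-- The relative entropy `H(Q | P)`, `= ∞` if `Q` is not absolutely continuous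
w.r.t. `P`. -/
def relEnt {α : Type*} [MeasurableSpace α] (Q P : Measure α) : ℝ≥0∞ :=
  if Q ≪ P ∧ Integrable
      (fun x => (Q.rnDeriv P x).toReal * Real.log (Q.rnDeriv P x).toReal) P then
    ENNReal.ofReal (∫ x, (Q.rnDeriv P x).toReal * Real.log (Q.rnDeriv P x).toReal ∂P)
  else ⊤

/-- The mean field objective `Q ↦ ∫ f dQ − H(Q)`. -/
def MFObj {α : Type*} [MeasureSpace α] (f : α → ℝ) (Q : Measure α) : EReal :=
  intE f Q - Hent Q

/-- A product probability measure on `ℝⁿ`. -/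
def IsProductProb (n : ℕ) (Q : Measure (Fin n → ℝ)) : Prop :=
  ∃ Qi : Fin n → Measure ℝ, (∀ i, IsProbabilityMeasure (Qi i)) ∧ Q = Measure.pi Qi

/-- The supremum of the mean field objective over product probability measures. -/
def MFSup (n : ℕ) (f : (Fin n → ℝ) → ℝ) : EReal :=
  sSup {e : EReal | ∃ Q : Measure (Fin n → ℝ), IsProductProb n Q ∧ e = MFObj f Q}

/-- The partition function `∫ e^f dx`. -/
def Zpart (n : ℕ) (f : (Fin n → ℝ) → ℝ) : ℝ≥0∞ :=
  ∫⁻ x, ENNReal.ofReal (Real.exp (f x)) ∂(volume : Measure (Fin n → ℝ))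

/-- The Gibbs probability measure `P(dx) = Z⁻¹ e^{f(x)} dx`. -/
def gibbs (n : ℕ) (f : (Fin n → ℝ) → ℝ) : Measure (Fin n → ℝ) :=
  (volume : Measure (Fin n → ℝ)).withDensity
    (fun x => ENNReal.ofReal (Real.exp (f x)) / Zpart n f)


open InformationTheory

lemma Real.mul_le_mul_log_sub_add_exp {t : ℝ} (ht : 0 ≤ t) (w : ℝ) :
    t * w ≤ t * log t - t + exp w := by
  rcases ht.eq_or_lt with rfl | ht
  · simpa using (exp_pos w).le
  · have h := mul_le_mul_of_nonneg_left (add_one_le_exp (w - log t)) ht.le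
    rw [exp_sub, exp_log ht, mul_div_cancel₀ _ ht.ne'] at h
    linarith

section Lintegral

variable {β : Type*} [MeasurableSpace β] {μ : Measure β} {g : β → ℝ}

lemma integrable_of_lintegral_ofReal_ne_top (hg : AEStronglyMeasurable g μ)
    (hpos : ∫⁻ x, ENNReal.ofReal (g x) ∂μ ≠ ∞) (hneg : ∫⁻ x, ENNReal.ofReal (-g x) ∂μ ≠ ∞) :
    Integrable g μ := by
  refine ⟨hg, ?_⟩
  calc ∫⁻ x, ‖g x‖ₑ ∂μ ≤ ∫⁻ x, (ENNReal.ofReal (g x) + ENNReal.ofReal (-g x)) ∂μ := by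
        refine lintegral_mono fun x => ?_
        rw [Real.enorm_eq_ofReal_abs, abs_eq_max_neg, ENNReal.ofReal_max]
        exact max_le le_self_add le_add_self
    _ = (∫⁻ x, ENNReal.ofReal (g x) ∂μ) + ∫⁻ x, ENNReal.ofReal (-g x) ∂μ :=
        lintegral_add_left' hg.aemeasurable.ennreal_ofReal _
    _ < ∞ := ENNReal.add_lt_top.2 ⟨hpos.lt_top, hneg.lt_top⟩

lemma intE_eq_integral (hg : Integrable g μ) : intE g μ = ((∫ x, g x ∂μ : ℝ) : EReal) := by
  rw [intE, integral_eq_lintegral_pos_part_sub_lintegral_neg_part hg, EReal.coe_sub,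
    EReal.coe_ennreal_toReal hg.lintegral_lt_top.ne,
    EReal.coe_ennreal_toReal (x := ∫⁻ x, ENNReal.ofReal (-g x) ∂μ) hg.neg.lintegral_lt_top.ne]

lemma intE_eq_bot (hg : AEStronglyMeasurable g μ) (hpos : ∫⁻ x, ENNReal.ofReal (g x) ∂μ ≠ ∞)
    (hint : ¬ Integrable g μ) : intE g μ = ⊥ := by
  have hneg : ∫⁻ x, ENNReal.ofReal (-g x) ∂μ = ∞ := by
    by_contra h
    exact hint (integrable_of_lintegral_ofReal_ne_top hg hpos h)
  rw [intE, hneg, EReal.coe_ennreal_top, EReal.sub_top]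

end Lintegral

section Entropy

variable {β : Type*} [MeasurableSpace β] {Q ν : Measure β} [SigmaFinite Q] [SigmaFinite ν]

-- Integrate `u * h ≤ u log u - u + exp h` for `u = dQ/dν`.
lemma lintegral_ofReal_lt_top_of_integrable_mul_log (hQν : Q ≪ ν) {h : β → ℝ}
    (hh : Measurable h) (hexp : Integrable (fun x => exp (h x)) ν)
    (hent : Integrable (fun x => (Q.rnDeriv ν x).toReal * log (Q.rnDeriv ν x).toReal) ν) :
    ∫⁻ x, ENNReal.ofReal (h x) ∂Q < ∞ := by
  rw [← lintegral_rnDeriv_mul hQν hh.ennreal_ofReal.aemeasurable]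
  calc ∫⁻ x, Q.rnDeriv ν x * ENNReal.ofReal (h x) ∂ν
      ≤ ∫⁻ x, (‖(Q.rnDeriv ν x).toReal * log (Q.rnDeriv ν x).toReal‖ₑ + ‖exp (h x)‖ₑ) ∂ν := by
        refine lintegral_mono_ae ?_
        filter_upwards [Q.rnDeriv_lt_top ν] with x hx
        set u := (Q.rnDeriv ν x).toReal
        rw [← ENNReal.ofReal_toReal hx.ne, ← ENNReal.ofReal_mul ENNReal.toReal_nonneg,
          Real.enorm_eq_ofReal_abs, Real.enorm_eq_ofReal_abs, abs_of_pos (exp_pos _),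
          ← ENNReal.ofReal_add (abs_nonneg _) (exp_pos _).le]
        refine ENNReal.ofReal_le_ofReal ?_
        have := Real.mul_le_mul_log_sub_add_exp (t := u) ENNReal.toReal_nonneg (h x)
        linarith [le_abs_self (u * log u), (ENNReal.toReal_nonneg : 0 ≤ u)]
    _ = (∫⁻ x, ‖(Q.rnDeriv ν x).toReal * log (Q.rnDeriv ν x).toReal‖ₑ ∂ν)
          + ∫⁻ x, ‖exp (h x)‖ₑ ∂ν :=
        lintegral_add_left' hent.1.enorm _
    _ < ∞ := ENNReal.add_lt_top.2 ⟨hent.2, hexp.2⟩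

lemma integrable_of_integrable_llr (hQν : Q ≪ ν) (hllr : Integrable (llr Q ν) Q) {f : β → ℝ}
    (hf : Measurable f) {c : ℝ} (hc : 0 < c) (hexp : Integrable (fun x => exp (c * |f x|)) ν) :
    Integrable f Q := by
  have hlt := lintegral_ofReal_lt_top_of_integrable_mul_log hQν (hf.abs.const_mul c) hexp
    ((integrable_rnDeriv_smul_iff hQν).2 hllr)
  have hcf : Integrable (fun x => c * |f x|) Q :=
    (lintegral_ofReal_ne_top_iff_integrable (hf.abs.const_mul c).aestronglyMeasurable
      (ae_of_all _ fun x => by positivity)).1 hlt.ne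
  refine (integrable_norm_iff hf.aestronglyMeasurable).1 ((hcf.const_mul c⁻¹).congr ?_)
  filter_upwards with x
  rw [← mul_assoc, inv_mul_cancel₀ hc.ne', one_mul, Real.norm_eq_abs]

lemma relEnt_eq_klDiv {P : Measure β} [IsProbabilityMeasure Q] [IsProbabilityMeasure P] :
    relEnt Q P = klDiv Q P := by
  by_cases hQP : Q ≪ P
  · by_cases hllr : Integrable (llr Q P) Q
    · rw [relEnt, if_pos ⟨hQP, (integrable_rnDeriv_smul_iff hQP).2 hllr⟩,
        klDiv_of_ac_of_integrable hQP hllr]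
      simp [← integral_rnDeriv_smul hQP, llr]
    · rw [relEnt, if_neg fun h => hllr ((integrable_rnDeriv_smul_iff hQP).1 h.2),
        klDiv_of_not_integrable hllr]
  · rw [relEnt, if_neg fun h => hQP h.1, klDiv_of_not_ac hQP]

end Entropy

section DifferentialEntropy

variable {α : Type*} [MeasureSpace α] [SigmaFinite (volume : Measure α)] {Q : Measure α}
  [SigmaFinite Q]

lemma Hent_eq_integral_llr (hQ : Q ≪ volume) (hllr : Integrable (llr Q volume) Q) :
    Hent Q = ((∫ x, llr Q volume x ∂Q : ℝ) : EReal) := by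
  set u : α → ℝ := fun x => (Q.rnDeriv volume x).toReal * log (Q.rnDeriv volume x).toReal
  have hu : Integrable u volume := (integrable_rnDeriv_smul_iff hQ).2 hllr
  have hmax : Integrable (fun x => max (u x) 0) volume := hu.pos_part
  have hmin : Integrable (fun x => min (u x) 0) volume :=
    (hu.sub hmax).congr (ae_of_all _ fun x => by
      simp only [Pi.sub_apply]; linarith [max_add_min (u x) 0])
  have hpos : ∫⁻ x, ENNReal.ofReal (u x) ∂volume = ENNReal.ofReal (∫ x, max (u x) 0) := by
    rw [ofReal_integral_eq_lintegral_ofReal hmax (ae_of_all _ fun x => le_max_right _ _)]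
    simp
  rw [Hent, if_pos ⟨hQ, hmin⟩, ← integral_rnDeriv_smul hQ]
  change ((∫⁻ x, ENNReal.ofReal (u x) ∂volume : ℝ≥0∞) : EReal) + ((∫ x, min (u x) 0 : ℝ) : EReal)
    = ((∫ x, u x : ℝ) : EReal)
  have hmax_nonneg : 0 ≤ ∫ x, max (u x) 0 := integral_nonneg fun x => le_max_right _ _
  rw [hpos, EReal.coe_ennreal_ofReal, max_eq_left hmax_nonneg,
    ← EReal.coe_add, ← integral_add hmax hmin]
  simp only [max_add_min, add_zero]

lemma Hent_eq_top (h : ¬ (Q ≪ volume ∧ Integrable (llr Q volume) Q)) : Hent Q = ⊤ := by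
  set u : α → ℝ := fun x => (Q.rnDeriv volume x).toReal * log (Q.rnDeriv volume x).toReal
  rw [Hent]
  split_ifs with hcond
  · obtain ⟨hQ, hmin⟩ := hcond
    have hpos : ∫⁻ x, ENNReal.ofReal (u x) ∂volume = ∞ := by
      by_contra hne
      have hmax : Integrable (fun x => max (u x) 0) volume := by
        refine (lintegral_ofReal_ne_top_iff_integrable ?_ (ae_of_all _ fun x => le_max_right _ _)).1
          (by simpa using hne)
        have hr := (Q.measurable_rnDeriv volume).ennreal_toReal
        exact ((hr.mul hr.log).max measurable_const).aestronglyMeasurable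
      exact h ⟨hQ, (integrable_rnDeriv_smul_iff hQ).1 ((hmax.add hmin).congr
        (ae_of_all _ fun x => show max (u x) 0 + min (u x) 0 = u x by rw [max_add_min, add_zero]))⟩
    change ((∫⁻ x, ENNReal.ofReal (u x) ∂volume : ℝ≥0∞) : EReal) + _ = ⊤
    rw [hpos, EReal.coe_ennreal_top, EReal.top_add_coe]
  · rfl

lemma Hent_volume_restrict {s : Set α} (hs : MeasurableSet s) : Hent (volume.restrict s) = 0 := by
  have hQ : volume.restrict s ≪ volume :=
    Measure.absolutelyContinuous_of_le Measure.restrict_le_self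
  have hllr : llr (volume.restrict s) volume =ᵐ[volume.restrict s] 0 := by
    filter_upwards [hQ.ae_le (Measure.rnDeriv_restrict_self volume hs), ae_restrict_mem hs]
      with x hx hxs
    simp [llr, hx, hxs]
  rw [Hent_eq_integral_llr hQ ((integrable_zero _ _ _).congr hllr.symm), integral_congr_ae hllr]
  simp

end DifferentialEntropy

section Gibbs

variable {α : Type*} [MeasureSpace α] [SigmaFinite (volume : Measure α)] {f : α → ℝ}

lemma MFObj_volume_restrict {s : Set α} (hs : MeasurableSet s) (hf : IntegrableOn f s) :
    MFObj f (volume.restrict s) = ((∫ x in s, f x : ℝ) : EReal) := by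
  rw [MFObj, intE_eq_integral hf, Hent_volume_restrict hs, sub_zero]

variable [NeZero (volume : Measure α)] {Q : Measure α} [IsProbabilityMeasure Q]

theorem MFObj_eq_log_integral_exp_sub_klDiv (hf : Measurable f)
    (hexp : Integrable (fun x => exp (f x)) volume) {c : ℝ} (hc : 0 < c)
    (hexp' : Integrable (fun x => exp (c * |f x|)) (volume.tilted f)) :
    MFObj f Q = ((log (∫ x, exp (f x)) : ℝ) : EReal) - klDiv Q (volume.tilted f) := by
  have := isProbabilityMeasure_tilted hexp
  by_cases hkl : klDiv Q (volume.tilted f) = ∞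
  · rw [hkl, EReal.coe_ennreal_top, EReal.sub_top]
    by_cases hent : Q ≪ volume ∧ Integrable (llr Q volume) Q
    · obtain ⟨hQ, hllr⟩ := hent
      have hnot : ¬ Integrable f Q := fun hfQ => klDiv_ne_top
        (hQ.trans (absolutelyContinuous_tilted hexp))
        (integrable_llr_tilted_right hQ hfQ hllr hexp) hkl
      -- `∫ f⁺ dQ < ∞`, so the non-integrability of `f` puts `∫ f dQ` at `-∞`.
      have hpos := lintegral_ofReal_lt_top_of_integrable_mul_log hQ hf hexp
        ((integrable_rnDeriv_smul_iff hQ).2 hllr)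
      rw [MFObj, intE_eq_bot hf.aestronglyMeasurable hpos.ne hnot, EReal.bot_sub]
    · rw [MFObj, Hent_eq_top hent, EReal.sub_top]
  · obtain ⟨hQP, hllr⟩ := klDiv_ne_top_iff.1 hkl
    have hQ : Q ≪ volume := hQP.trans (tilted_absolutelyContinuous _ _)
    have hfQ := integrable_of_integrable_llr hQP hllr hf hc hexp'
    have hllr' : Integrable (llr Q volume) Q := by
      refine ((hllr.add hfQ).sub (integrable_const (log (∫ x, exp (f x))))).congr ?_
      filter_upwards [llr_tilted_right hQ hexp] with x hx
      simp only [Pi.add_apply, Pi.sub_apply, hx]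
      ring
    rw [MFObj, intE_eq_integral hfQ, Hent_eq_integral_llr hQ hllr',
      ← EReal.coe_ennreal_toReal hkl, toReal_klDiv_of_measure_eq hQP (by simp),
      integral_llr_tilted_right hQ hfQ hexp hllr', ← EReal.coe_sub, ← EReal.coe_sub]
    ring_nf

end Gibbs

lemma ConcaveOn.le_add_mul_norm {E : Type*} [NormedAddCommGroup E] [NormedSpace ℝ E]
    {g : E → ℝ} (hg : ConcaveOn ℝ Set.univ g) {M : ℝ} (hM : ∀ y, ‖y‖ ≤ 1 → g y ≤ M) (x : E) :
    g x ≤ M + (M - g 0) * ‖x‖ := by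
  have hg0 : g 0 ≤ M := hM 0 (by simp)
  rcases le_or_gt ‖x‖ 1 with hx | hx
  · nlinarith [hM x hx, norm_nonneg x]
  set r := ‖x‖
  have hr : 0 < r := by linarith
  have hmid := hg.2 (Set.mem_univ x) (Set.mem_univ 0) (inv_nonneg.2 hr.le)
    (sub_nonneg.2 (inv_le_one_of_one_le₀ hx.le)) (add_sub_cancel _ _)
  rw [smul_zero, add_zero, smul_eq_mul, smul_eq_mul] at hmid
  have hy : g (r⁻¹ • x) ≤ M := hM _ (by rw [norm_smul, norm_inv, norm_norm, inv_mul_cancel₀ hr.ne'])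
  have hscaled := mul_le_mul_of_nonneg_left (hmid.trans hy) hr.le
  rw [mul_add, ← mul_assoc, ← mul_assoc, mul_inv_cancel₀ hr.ne', one_mul, mul_sub, mul_one,
    mul_inv_cancel₀ hr.ne'] at hscaled
  nlinarith

section Gaussian

variable {ι : Type*} [Fintype ι]

lemma norm_sq_le_sum_sq (x : ι → ℝ) : ‖x‖ ^ 2 ≤ ∑ i, x i ^ 2 := by
  have hs : 0 ≤ ∑ i, x i ^ 2 := by positivity
  refine (Real.le_sqrt (norm_nonneg x) hs).1 ((pi_norm_le_iff_of_nonneg (Real.sqrt_nonneg _)).2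
    fun i => ?_)
  rw [Real.norm_eq_abs]
  exact Real.abs_le_sqrt (Finset.single_le_sum (fun j _ => sq_nonneg (x j)) (Finset.mem_univ i))

-- The concave part grows at most linearly, which half of the quadratic term absorbs.
lemma exists_le_sub_mul_sum_sq {f : (ι → ℝ) → ℝ} {κ : ℝ} (hκ : 0 < κ) (hf : Continuous f)
    (hconc : ConcaveOn ℝ Set.univ fun x => f x + κ / 2 * ∑ i, x i ^ 2) :
    ∃ C, ∀ x, f x ≤ C - κ / 4 * ∑ i, x i ^ 2 := by
  set g := fun x : ι → ℝ => f x + κ / 2 * ∑ i, x i ^ 2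
  obtain ⟨M, hM⟩ := (isCompact_closedBall (0 : ι → ℝ) 1).exists_bound_of_continuousOn
    (hf.add (continuous_const.mul (continuous_finsetSum _ fun i _ =>
      (continuous_apply i).pow 2))).continuousOn
  have hM' : ∀ y : ι → ℝ, ‖y‖ ≤ 1 → g y ≤ M := fun y hy =>
    (le_abs_self _).trans (hM y (mem_closedBall_zero_iff.2 hy))
  set K := M - g 0
  refine ⟨M + K ^ 2 / κ, fun x => ?_⟩
  have hgx : f x + κ / 2 * ∑ i, x i ^ 2 ≤ M + K * ‖x‖ := hconc.le_add_mul_norm hM' x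
  have hnorm := mul_le_mul_of_nonneg_left (norm_sq_le_sum_sq x) (by positivity : 0 ≤ κ / 4)
  have hsq : K * ‖x‖ - κ / 4 * ‖x‖ ^ 2 ≤ K ^ 2 / κ := by
    have h : K ^ 2 / κ - (K * ‖x‖ - κ / 4 * ‖x‖ ^ 2) = (K - κ / 2 * ‖x‖) ^ 2 / κ := by
      field_simp
      ring
    linarith [div_nonneg (sq_nonneg (K - κ / 2 * ‖x‖)) hκ.le]
  linarith

lemma integrable_exp_of_le_sub_mul_sum_sq {g : (ι → ℝ) → ℝ} (hg : Measurable g) {b c : ℝ}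
    (hc : 0 < c) (hle : ∀ x, g x ≤ b - c * ∑ i, x i ^ 2) :
    Integrable (fun x => exp (g x)) := by
  have hgauss : Integrable (fun x : ι → ℝ => ∏ i, exp (-c * x i ^ 2)) :=
    Integrable.fintype_prod fun _ => integrable_exp_neg_mul_sq hc
  refine (hgauss.const_mul (exp b)).mono' hg.exp.aestronglyMeasurable (ae_of_all _ fun x => ?_)
  have hsum : ∑ i, -c * x i ^ 2 = -(c * ∑ i, x i ^ 2) := by
    rw [Finset.mul_sum, ← Finset.sum_neg_distrib]
    simp only [neg_mul]
  rw [Real.norm_of_nonneg (exp_pos _).le, ← exp_sum, ← exp_add, hsum, ← sub_eq_add_neg]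
  exact exp_le_exp.2 (hle x)

lemma integrable_exp_half_abs_tilted {g : (ι → ℝ) → ℝ} (hg : Measurable g) {C c : ℝ}
    (hc : 0 < c) (hle : ∀ x, g x ≤ C - c * ∑ i, x i ^ 2) :
    Integrable (fun x => exp (1 / 2 * |g x|)) (volume.tilted g) := by
  rw [integrable_tilted_iff (integrable_exp_of_le_sub_mul_sum_sq hg hc hle)]
  simp_rw [smul_eq_mul, ← exp_add]
  refine integrable_exp_of_le_sub_mul_sum_sq (b := 3 / 2 * |C|) (c := c / 2)
    (hg.add (hg.abs.const_mul _)) (by positivity) fun x => ?_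
  have hs : 0 ≤ ∑ i, x i ^ 2 := by positivity
  rcases le_total 0 (g x) with h | h
  · rw [abs_of_nonneg h]; nlinarith [hle x, le_abs_self C]
  · rw [abs_of_nonpos h]; nlinarith [hle x, le_abs_self C, neg_abs_le C]

end Gaussian

lemma EReal.sSup_image_coe_sub_coe_ennreal (c : ℝ) (s : Set ℝ≥0∞) :
    sSup ((fun r : ℝ≥0∞ => (c : EReal) - r) '' s) = c - ↑(sInf s) := by
  refine (Antitone.map_sInf_of_continuousAt ?_ (fun a b hab => ?_) ?_).symm
  · have hadd : ContinuousAt (fun p : EReal × EReal => p.1 + p.2)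
        ((c : EReal), -((sInf s : ℝ≥0∞) : EReal)) :=
      EReal.continuousAt_add (Or.inl (EReal.coe_ne_top c)) (Or.inl (EReal.coe_ne_bot c))
    simp_rw [sub_eq_add_neg]
    exact hadd.comp (f := fun r : ℝ≥0∞ => ((c : EReal), -(r : EReal)))
      (continuous_const.prodMk (continuous_neg.comp continuous_coe_ennreal_ereal)).continuousAt
  · exact EReal.sub_le_sub le_rfl (EReal.coe_ennreal_le_coe_ennreal_iff.2 hab)
  · simp

section MeanField

variable {n : ℕ} {f : (Fin n → ℝ) → ℝ}

lemma IsProductProb.isProbabilityMeasure {Q : Measure (Fin n → ℝ)} (hQ : IsProductProb n Q) :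
    IsProbabilityMeasure Q := by
  obtain ⟨Qi, hQi, rfl⟩ := hQ
  infer_instance

lemma exists_isProductProb_MFObj_ne_bot (hf : Continuous f) :
    ∃ Q, IsProductProb n Q ∧ MFObj f Q ≠ ⊥ := by
  set cube : Set (Fin n → ℝ) := Set.univ.pi fun _ => Set.Icc 0 1
  have hcube : MeasurableSet cube := MeasurableSet.univ_pi fun _ => measurableSet_Icc
  refine ⟨volume.restrict cube, ⟨fun _ => volume.restrict (Set.Icc 0 1), fun _ => ⟨by simp⟩,
    by rw [volume_pi, Measure.restrict_pi_pi]⟩, ?_⟩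
  rw [MFObj_volume_restrict hcube
    (hf.continuousOn.integrableOn_compact (isCompact_univ_pi fun _ => isCompact_Icc))]
  exact EReal.coe_ne_bot _

lemma Zpart_eq_ofReal_integral (hexp : Integrable (fun x => exp (f x))) :
    Zpart n f = ENNReal.ofReal (∫ x, exp (f x)) :=
  (ofReal_integral_eq_lintegral_ofReal hexp (ae_of_all _ fun _ => (exp_pos _).le)).symm

lemma gibbs_eq_tilted (hexp : Integrable (fun x => exp (f x))) : gibbs n f = volume.tilted f := by
  rw [gibbs, Measure.tilted, Zpart_eq_ofReal_integral hexp]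
  congr 1
  funext x
  rw [ENNReal.ofReal_div_of_pos (integral_exp_pos hexp)]

lemma MFObj_eq_log_integral_exp_sub_relEnt (hf : Measurable f)
    (hexp : Integrable (fun x => exp (f x)))
    (hexp' : Integrable (fun x => exp (1 / 2 * |f x|)) (volume.tilted f))
    (Q : Measure (Fin n → ℝ)) [IsProbabilityMeasure Q] :
    MFObj f Q = ((log (∫ x, exp (f x)) : ℝ) : EReal) - relEnt Q (gibbs n f) := by
  have := isProbabilityMeasure_tilted hexp
  rw [gibbs_eq_tilted hexp, relEnt_eq_klDiv]
  exact MFObj_eq_log_integral_exp_sub_klDiv hf hexp one_half_pos hexp'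

lemma integrable_of_relEnt_gibbs_ne_top (hf : Measurable f) (hexp : Integrable (fun x => exp (f x)))
    (hexp' : Integrable (fun x => exp (1 / 2 * |f x|)) (volume.tilted f))
    {Q : Measure (Fin n → ℝ)} [IsProbabilityMeasure Q] (hfin : relEnt Q (gibbs n f) ≠ ∞) :
    Integrable f Q := by
  have := isProbabilityMeasure_tilted hexp
  rw [gibbs_eq_tilted hexp, relEnt_eq_klDiv, klDiv_ne_top_iff] at hfin
  exact integrable_of_integrable_llr hfin.1 hfin.2 hf one_half_pos hexp'

lemma MFSup_eq_log_integral_exp_sub_sInf_relEnt (hf : Measurable f)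
    (hexp : Integrable (fun x => exp (f x)))
    (hexp' : Integrable (fun x => exp (1 / 2 * |f x|)) (volume.tilted f)) :
    MFSup n f = ((log (∫ x, exp (f x)) : ℝ) : EReal) - ↑(sInf {r : ℝ≥0∞ |
      ∃ Q : Measure (Fin n → ℝ), IsProductProb n Q ∧ r = relEnt Q (gibbs n f)}) := by
  rw [MFSup, ← EReal.sSup_image_coe_sub_coe_ennreal]
  congr 1
  ext e
  have hobj (Q : Measure (Fin n → ℝ)) (hQ : IsProductProb n Q) :=
    have := hQ.isProbabilityMeasure
    MFObj_eq_log_integral_exp_sub_relEnt hf hexp hexp' Q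
  constructor
  · rintro ⟨Q, hQ, rfl⟩
    exact ⟨_, ⟨Q, hQ, rfl⟩, (hobj Q hQ).symm⟩
  · rintro ⟨_, ⟨Q, hQ, rfl⟩, rfl⟩
    exact ⟨Q, hQ, (hobj Q hQ).symm⟩

lemma sInf_relEnt_gibbs_ne_top (hf : Continuous f) (hexp : Integrable (fun x => exp (f x)))
    (hexp' : Integrable (fun x => exp (1 / 2 * |f x|)) (volume.tilted f)) :
    sInf {r : ℝ≥0∞ | ∃ Q : Measure (Fin n → ℝ), IsProductProb n Q ∧ r = relEnt Q (gibbs n f)}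
      ≠ ∞ := by
  obtain ⟨Q₀, hQ₀, hne⟩ := exists_isProductProb_MFObj_ne_bot hf
  have := hQ₀.isProbabilityMeasure
  refine ne_top_of_le_ne_top (fun h => hne ?_) (sInf_le ⟨Q₀, hQ₀, rfl⟩)
  rw [MFObj_eq_log_integral_exp_sub_relEnt hf.measurable hexp hexp' Q₀, h,
    EReal.coe_ennreal_top, EReal.sub_top]

end MeanField

theorem stmt_18_general (n : ℕ) (f : (Fin n → ℝ) → ℝ) (κ : ℝ)
    (hκ : 0 < κ) (hC2 : ContDiff ℝ 2 f)
    (hconc : ConcaveOn ℝ Set.univ fun x => f x + κ / 2 * ∑ i, x i ^ 2) :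
    (⊥ < MFSup n f ∧ MFSup n f < ⊤) ∧
    (∀ Q : Measure (Fin n → ℝ), IsProductProb n Q → MFObj f Q = MFSup n f →
      Integrable f Q) ∧
    ((Real.log (Zpart n f).toReal : EReal) - MFSup n f
      = ((sInf {r : ℝ≥0∞ | ∃ Q : Measure (Fin n → ℝ), IsProductProb n Q ∧
          r = relEnt Q (gibbs n f)} : ℝ≥0∞) : EReal)) := by
  have hf : Continuous f := hC2.continuous
  obtain ⟨C, hC⟩ := exists_le_sub_mul_sum_sq hκ hf hconc
  have hexp := integrable_exp_of_le_sub_mul_sum_sq hf.measurable (by positivity) hC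
  have hexp' := integrable_exp_half_abs_tilted hf.measurable (by positivity) hC
  have hR := sInf_relEnt_gibbs_ne_top hf hexp hexp'
  set R := {r : ℝ≥0∞ | ∃ Q : Measure (Fin n → ℝ), IsProductProb n Q ∧ r = relEnt Q (gibbs n f)}
  have hsup : MFSup n f = ((log (∫ x, exp (f x)) - (sInf R).toReal : ℝ) : EReal) := by
    rw [MFSup_eq_log_integral_exp_sub_sInf_relEnt hf.measurable hexp hexp', EReal.coe_sub,
      EReal.coe_ennreal_toReal hR]
  refine ⟨⟨hsup ▸ EReal.bot_lt_coe _, hsup ▸ EReal.coe_lt_top _⟩, fun Q hQ hopt => ?_, ?_⟩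
  · have := hQ.isProbabilityMeasure
    refine integrable_of_relEnt_gibbs_ne_top hf.measurable hexp hexp' fun h => ?_
    rw [MFObj_eq_log_integral_exp_sub_relEnt hf.measurable hexp hexp' Q, h,
      EReal.coe_ennreal_top, EReal.sub_top, hsup] at hopt
    exact EReal.bot_ne_coe _ hopt
  · rw [Zpart_eq_ofReal_integral hexp, ENNReal.toReal_ofReal (integral_exp_pos hexp).le, hsup,
      ← EReal.coe_sub, ← EReal.coe_ennreal_toReal hR]
    congr 1
    ring

/-- Lemma 3.4: finiteness of the mean field supremum, integrability
at any optimizer, and the entropic-projection identity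
`log ∫ e^f dx − sup_{Q product} (∫ f dQ − H(Q)) = inf_{Q product} H(Q | P)`. -/
theorem stmt_18 (n : ℕ) (f : (Fin n → ℝ) → ℝ) (κ c₁ c₂ : ℝ)
    (hκ : 0 < κ) (hC2 : ContDiff ℝ 2 f)
    (hconc : ConcaveOn ℝ Set.univ fun x => f x + κ / 2 * ∑ i, x i ^ 2)
    (hc₁ : 0 ≤ c₁) (hc₂ : 0 ≤ c₂) (hc₂' : c₂ < κ / 2)
    (hgrowth : ∀ x, |f x| ≤ c₁ * Real.exp (c₂ * ∑ i, x i ^ 2)) :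
    (⊥ < MFSup n f ∧ MFSup n f < ⊤) ∧
    (∀ Q : Measure (Fin n → ℝ), IsProductProb n Q → MFObj f Q = MFSup n f →
      Integrable f Q) ∧
    ((Real.log (Zpart n f).toReal : EReal) - MFSup n f
      = ((sInf {r : ℝ≥0∞ | ∃ Q : Measure (Fin n → ℝ), IsProductProb n Q ∧
          r = relEnt Q (gibbs n f)} : ℝ≥0∞) : EReal)) :=
  stmt_18_general n f κ hκ hC2 hconc
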